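/- Let f₁, g₁ ∈ ℝ. On M define the Kepler Hamiltonian H₀(q,p) = |p|²/2 − 1/|q|, the generating function G(q,p) = −g₁ (p·q) H₀(q,p), and δ₁ = 2g₁ − f₁. Then the identity {G, H₀} + δ₁ H₀² = −f₁ H₀² − g₁ H₀/|q| holds at every point of M. (This is the first-order step of the normal-form construction relating the implicitly defined Hamiltonians f(H) = |p|²/2 − g(H)/|q| to the Kepler problem.) -/

import Mathlib

noncomputable section

/-- Squared Euclidean norm on `ℝ³`. -/
def normSq (v : Fin 3 → ℝ) : ℝ := ∑ i, v i ^ 2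

/-- Euclidean norm on `ℝ³`. -/
def nrm (v : Fin 3 → ℝ) : ℝ := Real.sqrt (normSq v)

/-- Euclidean inner product `p·q`. -/
def dotP (p q : Fin 3 → ℝ) : ℝ := ∑ i, p i * q i

/-- Partial derivative `∂F/∂q^k` of a Hamiltonian function at `(q,p)`. -/
def pdQ (F : (Fin 3 → ℝ) → (Fin 3 → ℝ) → ℝ) (q p : Fin 3 → ℝ) (k : Fin 3) : ℝ :=
  deriv (fun t => F (Function.update q k t) p) (q k)

/-- Partial derivative `∂F/∂p^k` of a Hamiltonian function at `(q,p)`. -/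
def pdP (F : (Fin 3 → ℝ) → (Fin 3 → ℝ) → ℝ) (q p : Fin 3 → ℝ) (k : Fin 3) : ℝ :=
  deriv (fun t => F q (Function.update p k t)) (p k)

/-- The Hamiltonian vector field `X_F(q,p) = (∂F/∂p, −∂F/∂q)`. -/
def Xham (F : (Fin 3 → ℝ) → (Fin 3 → ℝ) → ℝ) (q p : Fin 3 → ℝ) :
    (Fin 3 → ℝ) × (Fin 3 → ℝ) :=
  (fun k => pdP F q p k, fun k => -pdQ F q p k)


/-- The canonical Poisson bracket `{F,G} = Σ_k (∂F/∂q^k ∂G/∂p^k − ∂F/∂p^k ∂G/∂q^k)`. -/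
def pbr (F G : (Fin 3 → ℝ) → (Fin 3 → ℝ) → ℝ) (q p : Fin 3 → ℝ) : ℝ :=
  ∑ k, (pdQ F q p k * pdP G q p k - pdP F q p k * pdQ G q p k)

/-- The Kepler Hamiltonian `H₀(q,p) = |p|²/2 − 1/|q|`. -/
def Hkep : (Fin 3 → ℝ) → (Fin 3 → ℝ) → ℝ := fun q p => normSq p / 2 - 1 / nrm q

/- ### Auxiliary lemmas -/

lemma normSq_update (q : Fin 3 → ℝ) (k : Fin 3) (t : ℝ) :
    normSq (Function.update q k t) = normSq q - q k ^ 2 + t ^ 2 := by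
  unfold normSq
  have h : ∀ i, (Function.update q k t i) ^ 2
      = Function.update (fun i => q i ^ 2) k (t ^ 2) i := by
    intro i; by_cases h : i = k
    · subst h; simp
    · simp [Function.update_of_ne h]
  simp_rw [h]
  rw [Finset.sum_update_of_mem (Finset.mem_univ k),
    Finset.sum_eq_sum_sdiff_singleton_add (Finset.mem_univ k) (fun i => q i ^ 2)]
  ring

lemma dotP_update_right (p q : Fin 3 → ℝ) (k : Fin 3) (t : ℝ) :
    dotP p (Function.update q k t) = dotP p q - p k * q k + p k * t := by
  unfold dotP
  have h : ∀ i, p i * (Function.update q k t i)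
      = Function.update (fun i => p i * q i) k (p k * t) i := by
    intro i; by_cases h : i = k
    · subst h; simp
    · simp [Function.update_of_ne h]
  simp_rw [h]
  rw [Finset.sum_update_of_mem (Finset.mem_univ k),
    Finset.sum_eq_sum_sdiff_singleton_add (Finset.mem_univ k) (fun i => p i * q i)]
  ring

lemma dotP_update_left (p q : Fin 3 → ℝ) (k : Fin 3) (t : ℝ) :
    dotP (Function.update p k t) q = dotP p q - p k * q k + q k * t := by
  unfold dotP
  have h : ∀ i, (Function.update p k t i) * q i
      = Function.update (fun i => p i * q i) k (t * q k) i := by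
    intro i; by_cases h : i = k
    · subst h; simp
    · simp [Function.update_of_ne h]
  simp_rw [h]
  rw [Finset.sum_update_of_mem (Finset.mem_univ k),
    Finset.sum_eq_sum_sdiff_singleton_add (Finset.mem_univ k) (fun i => p i * q i)]
  ring

lemma normSq_nonneg' (v : Fin 3 → ℝ) : 0 ≤ normSq v :=
  Finset.sum_nonneg fun _ _ => sq_nonneg _

lemma normSq_pos (v : Fin 3 → ℝ) (hv : v ≠ 0) : 0 < normSq v := by
  rcases (normSq_nonneg' v).lt_or_eq with h | h
  · exact h
  · exfalso; apply hv; funext i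
    have h2 := (Finset.sum_eq_zero_iff_of_nonneg (fun i _ => sq_nonneg (v i))).mp h.symm
    have := h2 i (Finset.mem_univ i)
    simpa [pow_eq_zero_iff] using this

lemma nrm_pos (v : Fin 3 → ℝ) (hv : v ≠ 0) : 0 < nrm v :=
  Real.sqrt_pos.mpr (normSq_pos v hv)

lemma nrm_sq (v : Fin 3 → ℝ) : nrm v ^ 2 = normSq v :=
  Real.sq_sqrt (normSq_nonneg' v)

lemma hasDerivAt_inv_sqrt (c t₀ : ℝ) (h : 0 < c + t₀ ^ 2) :
    HasDerivAt (fun t => 1 / Real.sqrt (c + t ^ 2))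
      (-(t₀ / Real.sqrt (c + t₀ ^ 2) ^ 3)) t₀ := by
  have h1 : HasDerivAt (fun t : ℝ => c + t ^ 2) (2 * t₀) t₀ := by
    simpa using (hasDerivAt_pow 2 t₀).const_add c
  have h2 : HasDerivAt Real.sqrt (1 / (2 * Real.sqrt (c + t₀ ^ 2))) (c + t₀ ^ 2) :=
    Real.hasDerivAt_sqrt h.ne'
  have h3 := h2.comp t₀ h1
  have hs : 0 < Real.sqrt (c + t₀ ^ 2) := Real.sqrt_pos.mpr h
  have h4 : HasDerivAt (fun t => (Real.sqrt (c + t ^ 2))⁻¹)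
      (-(1 / (2 * Real.sqrt (c + t₀ ^ 2)) * (2 * t₀)) / (Real.sqrt ∘ fun t => c + t ^ 2) t₀ ^ 2) t₀ :=
    h3.fun_inv (by positivity)
  simp only [one_div] at h4 ⊢
  set s := Real.sqrt (c + t₀ ^ 2) with hsdef
  convert h4 using 1
  simp only [Function.comp_apply]
  rw [← hsdef]
  field_simp

lemma hasDerivAt_Hq (q p : Fin 3 → ℝ) (hq : q ≠ 0) (k : Fin 3) :
    HasDerivAt (fun t => Hkep (Function.update q k t) p) (q k / nrm q ^ 3) (q k) := by
  have hc : 0 < (normSq q - q k ^ 2) + (q k) ^ 2 := by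
    have := normSq_pos q hq; linarith
  have h := (hasDerivAt_inv_sqrt (normSq q - q k ^ 2) (q k) hc).const_sub (normSq p / 2)
  have heq : (fun t => Hkep (Function.update q k t) p)
      = fun t => normSq p / 2 - 1 / Real.sqrt (normSq q - q k ^ 2 + t ^ 2) := by
    funext t
    simp only [Hkep, nrm, normSq_update]
  rw [heq]
  have harg : normSq q - q k ^ 2 + q k ^ 2 = normSq q := by ring
  rw [harg] at h
  simpa [nrm] using h

lemma hasDerivAt_Hp (q p : Fin 3 → ℝ) (k : Fin 3) :
    HasDerivAt (fun t => Hkep q (Function.update p k t)) (p k) (p k) := by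
  have heq : (fun t => Hkep q (Function.update p k t))
      = fun t => ((normSq p - p k ^ 2 + t ^ 2) / 2 - 1 / nrm q) := by
    funext t
    simp only [Hkep, normSq_update]
  rw [heq]
  have h1 : HasDerivAt (fun t : ℝ => normSq p - p k ^ 2 + t ^ 2) (2 * p k) (p k) := by
    simpa using (hasDerivAt_pow 2 (p k)).const_add (normSq p - p k ^ 2)
  have h2 := (h1.div_const 2).sub_const (1 / nrm q)
  simpa using h2

lemma pdQ_Hkep (q p : Fin 3 → ℝ) (hq : q ≠ 0) (k : Fin 3) :
    pdQ Hkep q p k = q k / nrm q ^ 3 :=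
  (hasDerivAt_Hq q p hq k).deriv

lemma pdP_Hkep (q p : Fin 3 → ℝ) (k : Fin 3) :
    pdP Hkep q p k = p k :=
  (hasDerivAt_Hp q p k).deriv

lemma pdQ_G (g₁ : ℝ) (q p : Fin 3 → ℝ) (hq : q ≠ 0) (k : Fin 3) :
    pdQ (fun q p => -g₁ * dotP p q * Hkep q p) q p k
      = -g₁ * (p k * Hkep q p + dotP p q * (q k / nrm q ^ 3)) := by
  have hlin : HasDerivAt (fun t => -g₁ * dotP p (Function.update q k t)) (-g₁ * p k) (q k) := by
    have heq : (fun t => -g₁ * dotP p (Function.update q k t))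
        = fun t => -g₁ * (dotP p q - p k * q k) + (-g₁ * p k) * t := by
      funext t; rw [dotP_update_right]; ring
    rw [heq]
    simpa using ((hasDerivAt_id (q k)).const_mul (-g₁ * p k)).const_add
      (-g₁ * (dotP p q - p k * q k))
  have h := hlin.fun_mul (hasDerivAt_Hq q p hq k)
  have heq2 : (fun t => (fun q p => -g₁ * dotP p q * Hkep q p) (Function.update q k t) p)
      = fun t => (-g₁ * dotP p (Function.update q k t)) * Hkep (Function.update q k t) p := rfl
  rw [pdQ, heq2, h.deriv, Function.update_eq_self]
  ring

lemma pdP_G (g₁ : ℝ) (q p : Fin 3 → ℝ) (k : Fin 3) :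
    pdP (fun q p => -g₁ * dotP p q * Hkep q p) q p k
      = -g₁ * (q k * Hkep q p + dotP p q * p k) := by
  have hlin : HasDerivAt (fun t => -g₁ * dotP (Function.update p k t) q) (-g₁ * q k) (p k) := by
    have heq : (fun t => -g₁ * dotP (Function.update p k t) q)
        = fun t => -g₁ * (dotP p q - p k * q k) + (-g₁ * q k) * t := by
      funext t; rw [dotP_update_left]; ring
    rw [heq]
    simpa using ((hasDerivAt_id (p k)).const_mul (-g₁ * q k)).const_add
      (-g₁ * (dotP p q - p k * q k))
  have h := hlin.fun_mul (hasDerivAt_Hp q p k)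
  have heq2 : (fun t => (fun q p => -g₁ * dotP p q * Hkep q p) q (Function.update p k t))
      = fun t => (-g₁ * dotP (Function.update p k t) q) * Hkep q (Function.update p k t) := rfl
  rw [pdP, heq2, h.deriv, Function.update_eq_self]
  ring

/-- first-order step of the normal-form construction. With
`G = −g₁ (p·q) H₀` and `δ₁ = 2g₁ − f₁`, the identity
`{G, H₀} + δ₁ H₀² = −f₁ H₀² − g₁ H₀/|q|` holds at every point of `M = (ℝ³∖{0}) × ℝ³`. -/
theorem first_order_normal_form_step (f₁ g₁ : ℝ) :
    ∀ q p : Fin 3 → ℝ, q ≠ 0 →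
      pbr (fun q p => -g₁ * dotP p q * Hkep q p) Hkep q p
          + (2 * g₁ - f₁) * (Hkep q p) ^ 2
        = -f₁ * (Hkep q p) ^ 2 - g₁ * Hkep q p / nrm q := by
  intro q p hq
  have hr : (0:ℝ) < nrm q := nrm_pos q hq
  have hbr : pbr (fun q p => -g₁ * dotP p q * Hkep q p) Hkep q p
      = -g₁ * (Hkep q p * normSq p - Hkep q p * normSq q / nrm q ^ 3) := by
    unfold pbr
    rw [Fin.sum_univ_three]
    rw [pdQ_G g₁ q p hq, pdQ_G g₁ q p hq, pdQ_G g₁ q p hq,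
      pdP_G g₁ q p, pdP_G g₁ q p, pdP_G g₁ q p,
      pdQ_Hkep q p hq, pdQ_Hkep q p hq, pdQ_Hkep q p hq,
      pdP_Hkep q p, pdP_Hkep q p, pdP_Hkep q p]
    simp only [normSq, dotP, Fin.sum_univ_three]
    field_simp
    ring
  rw [hbr]
  have hnq : normSq q = nrm q ^ 2 := (nrm_sq q).symm
  have hnp : normSq p = 2 * Hkep q p + 2 / nrm q := by
    simp only [Hkep]; field_simp; ring
  rw [hnq, hnp]
  field_simp
  ring

end
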